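/- arXiv:1104.0293 — 2 statements merged into one kernel-verified Lean document; each statement's English description precedes it below -/
import Mathlib

section
/- Let H be a reduced, commutative, cancellative, atomic monoid, let a ∈ H, and let x, y ∈ Z(a) with |x| = |y|. If x and y are not ≈_eq-related (i.e., no equal-length R-chain connects them), then (x,y) ∈ A_a(∼_{H,eq}). -/
namespace CMR

variable {α : Type*} [CancelCommMonoid α]

/-- The factorization monoid `Z(H)`: the free abelian monoid over the set of atoms of `H`,
modeled as multisets of atoms. -/
abbrev Fac (α : Type*) [CancelCommMonoid α] : Type _ := Multiset {u : α // Irreducible u}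

/-- The factorization homomorphism `π : Z(H) → H`. -/
def piF (z : Fac α) : α := (z.map Subtype.val).prod

/-- `Z a`: the set of factorizations of `a`. -/
def Z (a : α) : Set (Fac α) := {z | piF z = a}

/-- `L a`: the set of lengths of `a`. -/
def L (a : α) : Set ℕ := {n | ∃ z ∈ Z a, Multiset.card z = n}

/-- `Zk a k`: the factorizations of `a` of length `k`. -/
def Zk (a : α) (k : ℕ) : Set (Fac α) := {z ∈ Z a | Multiset.card z = k}

/-- `ZM a M`: the factorizations of `a` whose length lies in `M`. -/
def ZM (a : α) (M : Set ℕ) : Set (Fac α) := {z ∈ Z a | Multiset.card z ∈ M}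

/-- The distance between two factorizations:
`d(z,z') = max (|z / gcd(z,z')|, |z' / gcd(z,z')|)`. -/
noncomputable def d (z z' : Fac α) : ℕ :=
  letI := Classical.decEq {u : α // Irreducible u}
  max (Multiset.card (z - z')) (Multiset.card (z' - z))

/-- The distance between two sets of factorizations, the minimum of pairwise
distances (with the convention `sInf ∅ = 0`). -/
noncomputable def dS (X Y : Set (Fac α)) : ℕ :=
  sInf {n : ℕ | ∃ x ∈ X, ∃ y ∈ Y, d x y = n}

/-- `k` and `l` are adjacent lengths of `a` (with `k < l`):
`L(a) ∩ [k, l] = {k, l}`. -/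
def Adjacent (a : α) (k l : ℕ) : Prop :=
  k ∈ L a ∧ l ∈ L a ∧ k < l ∧ ∀ m ∈ L a, k ≤ m → m ≤ l → m = k ∨ m = l

/-- A chain of factorizations of `a` from `z` to `z'` whose consecutive members
satisfy the step predicate `P`. -/
def Chain (a : α) (P : Fac α → Fac α → Prop) (z z' : Fac α) : Prop :=
  ∃ (n : ℕ) (c : Fin (n + 1) → Fac α),
    c 0 = z ∧ c (Fin.last n) = z' ∧ (∀ i, c i ∈ Z a) ∧
    ∀ i : Fin n, P (c i.castSucc) (c i.succ)

/-- The catenary degree of an element: the smallest `N ∈ ℕ∞` such that any two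
factorizations of `a` are connected by an `N`-chain. -/
noncomputable def cat (a : α) : ℕ∞ :=
  sInf {N : ℕ∞ | ∀ z ∈ Z a, ∀ z' ∈ Z a,
    Chain a (fun x y => (d x y : ℕ∞) ≤ N) z z'}

/-- The equal catenary degree of an element: the smallest `N ∈ ℕ∞` such that any two
factorizations of `a` of the same length are connected by an equal-length `N`-chain. -/
noncomputable def ceq (a : α) : ℕ∞ :=
  sInf {N : ℕ∞ | ∀ z ∈ Z a, ∀ z' ∈ Z a, Multiset.card z = Multiset.card z' →
    Chain a (fun x y => (d x y : ℕ∞) ≤ N ∧ Multiset.card x = Multiset.card y) z z'}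

/-- The monotone catenary degree of an element: the smallest `N ∈ ℕ∞` such that any two
factorizations of `a` (ordered by length) are connected by a monotone `N`-chain. -/
noncomputable def cmon (a : α) : ℕ∞ :=
  sInf {N : ℕ∞ | ∀ z ∈ Z a, ∀ z' ∈ Z a, Multiset.card z ≤ Multiset.card z' →
    Chain a (fun x y => (d x y : ℕ∞) ≤ N ∧ Multiset.card x ≤ Multiset.card y) z z'}

/-- The adjacent catenary degree of an element:
`c_adj(a) = sup{d(Z_k(a), Z_l(a)) : k, l ∈ L(a) adjacent}`. -/
noncomputable def cadj (a : α) : ℕ∞ :=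
  sSup {r : ℕ∞ | ∃ k l : ℕ, Adjacent a k l ∧ r = (dS (Zk a k) (Zk a l) : ℕ∞)}

noncomputable def catH (α : Type*) [CancelCommMonoid α] : ℕ∞ := ⨆ a : α, cat a
noncomputable def ceqH (α : Type*) [CancelCommMonoid α] : ℕ∞ := ⨆ a : α, ceq a
noncomputable def cmonH (α : Type*) [CancelCommMonoid α] : ℕ∞ := ⨆ a : α, cmon a
noncomputable def cadjH (α : Type*) [CancelCommMonoid α] : ℕ∞ := ⨆ a : α, cadj a

/-- `gcd(x, y) ≠ 1`: the two factorizations share an atom. -/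
def RStep (x y : Fac α) : Prop := ∃ u, u ∈ x ∧ u ∈ y

/-- `z ≈ z'`: there is an `R`-chain concatenating `z` and `z'` in `Z a`. -/
def RRel (a : α) (z z' : Fac α) : Prop := Chain a RStep z z'

/-- `z ≈_eq z'`: there is an equal-length `R`-chain concatenating `z` and `z'` in `Z a`. -/
def RRelEq (a : α) (z z' : Fac α) : Prop :=
  Chain a (fun x y => RStep x y ∧ Multiset.card x = Multiset.card y) z z'

/-- There is a monotone `R`-chain from `z` to `z'` in `Z a`. -/
def MonRChain (a : α) (z z' : Fac α) : Prop :=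
  Chain a (fun x y => RStep x y ∧ Multiset.card x ≤ Multiset.card y) z z'

/-- `μ(a)`: the supremum, over the `R`-classes `ρ` of `Z a`, of the minimal length of
an element of `ρ`. -/
noncomputable def mu (a : α) : ℕ∞ :=
  sSup {r : ℕ∞ | ∃ z ∈ Z a,
    r = ((sInf {n : ℕ | ∃ z', RRel a z z' ∧ Multiset.card z' = n} : ℕ) : ℕ∞)}

noncomputable def muH (α : Type*) [CancelCommMonoid α] : ℕ∞ := ⨆ a : α, mu a

/-- `μ_eq(a) = sup{k ∈ L(a) : Z_k(a) has more than one ≈_eq-class}`. -/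
noncomputable def mueq (a : α) : ℕ∞ :=
  sSup {r : ℕ∞ | ∃ k ∈ L a,
    (∃ z ∈ Zk a k, ∃ z' ∈ Zk a k, ¬ RRelEq a z z') ∧ r = (k : ℕ∞)}

noncomputable def mueqH (α : Type*) [CancelCommMonoid α] : ℕ∞ := ⨆ a : α, mueq a

/-- `μ_adj(a) = sup{k ∈ L(a) : d(Z_k(a), Z_l(a)) = k for the l ∈ L(a), l < k adjacent to k}`. -/
noncomputable def muadj (a : α) : ℕ∞ :=
  sSup {r : ℕ∞ | ∃ k ∈ L a,
    (∃ l : ℕ, Adjacent a l k ∧ dS (Zk a k) (Zk a l) = k) ∧ r = (k : ℕ∞)}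

noncomputable def muadjH (α : Type*) [CancelCommMonoid α] : ℕ∞ := ⨆ a : α, muadj a

/-- The monoid of relations of `H`, as a subset of `Z(H) × Z(H)`. -/
def relMon (α : Type*) [CancelCommMonoid α] : Set (Fac α × Fac α) :=
  {p | piF p.1 = piF p.2}

/-- The monoid of equal-length relations of `H`. -/
def relMonEq (α : Type*) [CancelCommMonoid α] : Set (Fac α × Fac α) :=
  {p | piF p.1 = piF p.2 ∧ Multiset.card p.1 = Multiset.card p.2}

/-- The monoid of monotone relations of `H`. -/
def relMonMon (α : Type*) [CancelCommMonoid α] : Set (Fac α × Fac α) :=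
  {p | piF p.1 = piF p.2 ∧ Multiset.card p.1 ≤ Multiset.card p.2}

/-- `p` is an atom (irreducible element) of the reduced submonoid `S` of `Z(H) × Z(H)`. -/
def IsAtomIn (S : Set (Fac α × Fac α)) (p : Fac α × Fac α) : Prop :=
  p ∈ S ∧ p ≠ 0 ∧ ∀ q ∈ S, ∀ r ∈ S, p = q + r → q = 0 ∨ r = 0

/-- `A_a(S) = A(S) ∩ (Z(a) × Z(a))`. -/
def AtomsAt (S : Set (Fac α × Fac α)) (a : α) : Set (Fac α × Fac α) :=
  {p | IsAtomIn S p ∧ p.1 ∈ Z a ∧ p.2 ∈ Z a}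

/-- The tame degree `t(a, x)`. -/
noncomputable def tdeg (a : α) (x : Fac α) : ℕ∞ :=
  sInf {N : ℕ∞ | ∀ z ∈ Z a, (∃ w ∈ Z a, x ≤ w) →
    ∃ z' ∈ Z a, x ≤ z' ∧ (d z z' : ℕ∞) ≤ N}

/-- The tame degree `t(H) = sup{t(a, u) : a ∈ H, u ∈ A(H)}`. -/
noncomputable def tH (α : Type*) [CancelCommMonoid α] : ℕ∞ :=
  ⨆ (a : α) (u : {u : α // Irreducible u}), tdeg a {u}

/-- The `m`-adjacent catenary degree of an element:
`c_{ad,m}(a) = sup{d(Z_k(a), Z_{[k-m,k)}(a)) : k ∈ L(a)}`. -/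
noncomputable def cadm (m : ℕ) (a : α) : ℕ∞ :=
  sSup {r : ℕ∞ | ∃ k ∈ L a, r = (dS (Zk a k) (ZM a (Set.Ico (k - m) k)) : ℕ∞)}

noncomputable def cadmH (α : Type*) [CancelCommMonoid α] (m : ℕ) : ℕ∞ := ⨆ a : α, cadm m a

/-- `μ_{ad,m}(a) = sup{k ∈ L(a) : d(Z_k(a), Z_{[k-m,k)}(a)) = k}`. -/
noncomputable def muadm (m : ℕ) (a : α) : ℕ∞ :=
  sSup {r : ℕ∞ | ∃ k ∈ L a, dS (Zk a k) (ZM a (Set.Ico (k - m) k)) = k ∧ r = (k : ℕ∞)}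

noncomputable def muadmH (α : Type*) [CancelCommMonoid α] (m : ℕ) : ℕ∞ := ⨆ a : α, muadm m a

/-- `H` is reduced: the only unit is `1`. -/
def Reduced (α : Type*) [CancelCommMonoid α] : Prop := ∀ a : α, IsUnit a → a = 1

/-- `H` is atomic: every element is a product of atoms. -/
def Atomic (α : Type*) [CancelCommMonoid α] : Prop := ∀ a : α, ∃ z : Fac α, piF z = a

/-- The ascending chain condition on principal ideals. -/
def ACCP (α : Type*) [CancelCommMonoid α] : Prop :=
  ∀ f : ℕ → α, (∀ n, f (n + 1) ∣ f n) → ∃ N, ∀ n, N ≤ n → f N ∣ f n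

lemma piF_add (x y : Fac α) : piF (x + y) = piF x * piF y := by
  simp [piF]

lemma rrelEq_refl {a : α} {x : Fac α} (hx : x ∈ Z a) : RRelEq a x x :=
  ⟨0, fun _ => x, rfl, rfl, fun _ => hx, fun i => i.elim0⟩

lemma chain_of_step_step {a : α} {P : Fac α → Fac α → Prop} {x z y : Fac α}
    (hx : x ∈ Z a) (hz : z ∈ Z a) (hy : y ∈ Z a) (hxz : P x z) (hzy : P z y) :
    Chain a P x y := by
  refine ⟨2, ![x, z, y], rfl, rfl, fun i => ?_, fun i => ?_⟩ <;> fin_cases i <;> assumption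

lemma eq_zero_of_mem_relMonEq_of_fst_eq_zero {p : Fac α × Fac α} (hp : p ∈ relMonEq α)
    (h : p.1 = 0) : p = 0 :=
  Prod.ext h (Multiset.card_eq_zero.mp (hp.2 ▸ h ▸ Multiset.card_zero))

lemma eq_zero_of_mem_relMonEq_of_snd_eq_zero {p : Fac α × Fac α} (hp : p ∈ relMonEq α)
    (h : p.2 = 0) : p = 0 :=
  Prod.ext (Multiset.card_eq_zero.mp (hp.2.symm ▸ h ▸ Multiset.card_zero)) h

/-- Swapping the first component of `q` for its second gives the factorization `q.2 + r.1`,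
which shares an atom of `r.1` with `q.1 + r.1` and one of `q.2` with `q.2 + r.2`. -/
lemma rrelEq_of_add {a : α} {q r : Fac α × Fac α} (hq : q ∈ relMonEq α) (hr : r ∈ relMonEq α)
    (hq0 : q ≠ 0) (hr0 : r ≠ 0) (ha : (q + r).1 ∈ Z a) :
    RRelEq a (q + r).1 (q + r).2 := by
  obtain ⟨u, hu⟩ := Multiset.exists_mem_of_ne_zero
    (mt (eq_zero_of_mem_relMonEq_of_fst_eq_zero hr) hr0)
  obtain ⟨v, hv⟩ := Multiset.exists_mem_of_ne_zero
    (mt (eq_zero_of_mem_relMonEq_of_snd_eq_zero hq) hq0)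
  have hmid : q.2 + r.1 ∈ Z a := by
    simpa only [Z, Set.mem_ofPred_eq, Prod.fst_add, piF_add, hq.1] using ha
  have hb : (q + r).2 ∈ Z a := by
    simpa only [Z, Set.mem_ofPred_eq, Prod.fst_add, Prod.snd_add, piF_add, hq.1, hr.1] using ha
  refine chain_of_step_step ha hmid hb ⟨⟨u, ?_, ?_⟩, ?_⟩ ⟨⟨v, ?_, ?_⟩, ?_⟩
  all_goals simp only [Prod.fst_add, Prod.snd_add, Multiset.mem_add, Multiset.card_add,
    hq.2, hr.2, hu, hv, or_true, true_or]

theorem stmt2_general {α : Type*} [CancelCommMonoid α]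
    (a : α) (x y : Fac α)
    (hx : x ∈ Z a) (hy : y ∈ Z a) (hlen : Multiset.card x = Multiset.card y)
    (hne : ¬ RRelEq a x y) :
    (x, y) ∈ AtomsAt (relMonEq α) a := by
  refine ⟨⟨⟨hx.trans hy.symm, hlen⟩, fun h0 => ?_, fun q hq r hr hqr => ?_⟩, hx, hy⟩
  · obtain rfl : x = y := (congrArg Prod.fst h0).trans (congrArg Prod.snd h0).symm
    exact hne (rrelEq_refl hx)
  · by_contra! h
    have hxy := rrelEq_of_add hq hr h.1 h.2 (by rwa [← hqr])
    rw [← hqr] at hxy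
    exact hne hxy

/-- Let `H` be a reduced, commutative, cancellative, atomic monoid, `a ∈ H`, and
`x, y ∈ Z(a)` with `|x| = |y|`. If `x` and `y` are not `≈_eq`-related, then
`(x, y) ∈ A_a(∼_{H,eq})`. -/
theorem stmt2 {α : Type*} [CancelCommMonoid α]
    (hred : Reduced α) (hatomic : Atomic α) (a : α) (x y : Fac α)
    (hx : x ∈ Z a) (hy : y ∈ Z a) (hlen : Multiset.card x = Multiset.card y)
    (hne : ¬ RRelEq a x y) :
    (x, y) ∈ AtomsAt (relMonEq α) a :=
  stmt2_general a x y hx hy hlen hne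

end CMR
end

section
/- Let H be a reduced, commutative, cancellative, atomic monoid. Then c_eq(a) ≥ μ_eq(a) for every a ∈ H, and c_eq(H) = μ_eq(H). -/
namespace CMR

variable {α : Type*} [CancelCommMonoid α]

/-!
If `N < k`, two factorizations of length `k` at distance at most `N` must share an atom, so an
equal-length `N`-chain through `Z_k(a)` is an equal-length `R`-chain; hence `μ_eq(a) ≤ c_eq(a)`.
Conversely, let `N ≥ μ_eq(b)` for all `b`. Two factorizations of length `k` of `a` that are not
`≈_eq`-equivalent have distance at most `k ≤ μ_eq(a) ≤ N`. Every step of an equal-length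
`R`-chain shares an atom `u`; cancelling `u` gives two factorizations of length `k - 1` of
`a / u`, which by induction on `k` are joined by an equal-length `N`-chain, and multiplying that
chain back by `u` joins the original step. Hence `c_eq(a) ≤ μ_eq(H)` for every `a`.
-/

open Relation Multiset

theorem piF_cons (u : {u : α // Irreducible u}) (s : Fac α) :
    piF (u ::ₘ s) = u * piF s := by
  simp [piF]

namespace Chain

variable {a : α} {P Q : Fac α → Fac α → Prop} {x y z z' : Fac α}

theorem mem_left (h : Chain a P z z') : z ∈ Z a := by
  obtain ⟨n, c, rfl, -, hmem, -⟩ := h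
  exact hmem 0

theorem mem_right (h : Chain a P z z') : z' ∈ Z a := by
  obtain ⟨n, c, -, rfl, hmem, -⟩ := h
  exact hmem _

theorem refl (hz : z ∈ Z a) : Chain a P z z :=
  ⟨0, fun _ => z, rfl, rfl, fun _ => hz, fun i => i.elim0⟩

theorem tail (h : Chain a P z y) (hz' : z' ∈ Z a) (hstep : P y z') : Chain a P z z' := by
  obtain ⟨n, c, h0, hl, hmem, hs⟩ := h
  refine ⟨n + 1, Fin.snoc c z', ?_, by simp, ?_, ?_⟩
  · rw [show (0 : Fin (n + 2)) = (0 : Fin (n + 1)).castSucc from rfl, Fin.snoc_castSucc, h0]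
  · refine Fin.lastCases (by simpa using hz') fun j => ?_
    rw [Fin.snoc_castSucc]
    exact hmem j
  · refine Fin.lastCases ?_ fun j => ?_
    · rw [Fin.succ_last, Fin.snoc_last, Fin.snoc_castSucc, hl]
      exact hstep
    · rw [Fin.succ_castSucc, Fin.snoc_castSucc, Fin.snoc_castSucc]
      exact hs j

theorem single (hz : z ∈ Z a) (hz' : z' ∈ Z a) (h : P z z') : Chain a P z z' :=
  (refl hz).tail hz' h

theorem iff_reflTransGen (hz : z ∈ Z a) :
    Chain a P z z' ↔ ReflTransGen (fun x y => P x y ∧ y ∈ Z a) z z' := by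
  constructor
  · rintro ⟨n, c, rfl, rfl, hmem, hs⟩
    suffices ∀ i, ReflTransGen (fun x y => P x y ∧ y ∈ Z a) (c 0) (c i) from this _
    intro i
    induction i using Fin.induction with
    | zero => exact .refl
    | succ j ih => exact ih.tail ⟨hs j, hmem j.succ⟩
  · intro h
    induction h with
    | refl => exact refl hz
    | tail _ hstep ih => exact ih.tail hstep.2 hstep.1

theorem trans (h₁ : Chain a P z y) (h₂ : Chain a P y z') : Chain a P z z' :=
  (iff_reflTransGen h₁.mem_left).2
    (((iff_reflTransGen h₁.mem_left).1 h₁).trans ((iff_reflTransGen h₂.mem_left).1 h₂))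

theorem cons {b : α} (u : {u : α // Irreducible u})
    (hP : ∀ x y, P x y → P (u ::ₘ x) (u ::ₘ y)) (h : Chain b P x y) :
    Chain ((u : α) * b) P (u ::ₘ x) (u ::ₘ y) := by
  obtain ⟨n, c, rfl, rfl, hmem, hs⟩ := h
  refine ⟨n, fun i => u ::ₘ c i, rfl, rfl, fun i => ?_, fun i => hP _ _ (hs i)⟩
  show piF (u ::ₘ c i) = u * b
  rw [piF_cons, show piF (c i) = b from hmem i]

theorem bind (h : Chain a P z z') (hP : ∀ x y, P x y → card x = card y)
    (hPQ : ∀ x y, x ∈ Z a → y ∈ Z a → card x = card z → P x y → Chain a Q x y) :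
    Chain a Q z z' := by
  have hz := h.mem_left
  induction (iff_reflTransGen hz).1 h with
  | refl => exact refl hz
  | @tail w y hzw hstep ih =>
    have hcard : card z = card w := by
      simpa [reflTransGen_eq_self] using hzw.lift card fun x y hxy => hP x y hxy.1
    have ih := ih ((iff_reflTransGen hz).2 hzw)
    exact ih.trans (hPQ w y ih.mem_right hstep.2 hcard.symm hstep.1)

end Chain

theorem d_def [DecidableEq {u : α // Irreducible u}] (x y : Fac α) :
    d x y = max (card (x - y)) (card (y - x)) := by
  unfold d
  congr!

theorem d_cons (u : {u : α // Irreducible u}) (x y : Fac α) :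
    d (u ::ₘ x) (u ::ₘ y) = d x y := by
  classical
  simp only [d_def, sub_cons, erase_cons_head]

theorem d_le_card_of_card_eq {x y : Fac α} (h : card x = card y) : d x y ≤ card x := by
  classical
  rw [d_def]
  exact max_le (card_le_card tsub_le_self) (h ▸ card_le_card tsub_le_self)

theorem card_le_d_of_not_rStep {x y : Fac α} (h : ¬ RStep x y) : card x ≤ d x y := by
  classical
  have hsub : x - y = x := by
    ext u
    by_cases hu : u ∈ y
    · rw [count_sub, count_eq_zero_of_notMem fun hux => h ⟨u, hux, hu⟩, Nat.zero_sub]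
    · rw [count_sub, count_eq_zero_of_notMem hu, Nat.sub_zero]
  rw [d_def, hsub]
  exact le_max_left _ _

theorem rRelEq_of_chain_of_lt {a : α} {N : ℕ∞} {z z' : Fac α}
    (h : Chain a (fun x y => (d x y : ℕ∞) ≤ N ∧ card x = card y) z z') (hN : N < card z) :
    RRelEq a z z' := by
  refine h.bind (fun _ _ hxy => hxy.2) fun x y hx hy hxz ⟨hd, hxy⟩ =>
    Chain.single hx hy ⟨?_, hxy⟩
  by_contra hno
  have hzN : ((card z : ℕ) : ℕ∞) ≤ N :=
    hxz ▸ (Nat.cast_le.2 (card_le_d_of_not_rStep hno)).trans hd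
  exact hzN.not_gt hN

theorem mueq_le_ceq (a : α) : mueq a ≤ ceq a := by
  refine sSup_le ?_
  rintro _ ⟨k, -, ⟨z, ⟨hz, rfl⟩, z', ⟨hz', hcard⟩, hne⟩, rfl⟩
  refine le_sInf fun N hN => ?_
  by_contra! hlt
  exact hne (rRelEq_of_chain_of_lt (hN z hz z' hz' hcard.symm) hlt)

theorem chain_of_forall_mueq_le {N : ℕ∞} (hN : ∀ b : α, mueq b ≤ N) (k : ℕ) :
    ∀ {a : α} {z z' : Fac α}, z ∈ Zk a k → z' ∈ Zk a k →
      Chain a (fun x y => (d x y : ℕ∞) ≤ N ∧ card x = card y) z z' := by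
  induction k with
  | zero =>
    rintro a z z' ⟨hz, hz0⟩ ⟨-, hz'0⟩
    obtain rfl := card_eq_zero.1 hz0
    obtain rfl := card_eq_zero.1 hz'0
    exact Chain.refl hz
  | succ k ih =>
    intro a z z' hz hz'
    by_cases hR : RRelEq a z z'
    · refine hR.bind (fun _ _ hxy => hxy.2) ?_
      rintro x y hx hy hxz ⟨⟨u, hux, huy⟩, hxy⟩
      obtain ⟨x, rfl⟩ := exists_cons_of_mem hux
      obtain ⟨y, rfl⟩ := exists_cons_of_mem huy
      have hx : (u : α) * piF x = a := piF_cons u x ▸ hx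
      have hy : (u : α) * piF y = a := piF_cons u y ▸ hy
      subst hx
      rw [hz.2, card_cons] at hxz
      rw [card_cons, card_cons] at hxy
      exact (ih ⟨rfl, by omega⟩ ⟨mul_left_cancel hy, by omega⟩).cons u
        fun _ _ h => ⟨by rw [d_cons]; exact h.1, by rw [card_cons, card_cons, h.2]⟩
    · have hk : ((k + 1 : ℕ) : ℕ∞) ≤ mueq a :=
        le_sSup ⟨k + 1, ⟨z, hz⟩, ⟨z, hz, z', hz', hR⟩, rfl⟩
      have hcard : card z = card z' := hz.2.trans hz'.2.symm
      refine Chain.single hz.1 hz'.1 ⟨?_, hcard⟩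
      calc (d z z' : ℕ∞) ≤ card z := by exact_mod_cast d_le_card_of_card_eq hcard
        _ = (k + 1 : ℕ) := by rw [hz.2]
        _ ≤ N := hk.trans (hN a)

theorem ceq_le_mueqH (a : α) : ceq a ≤ mueqH α :=
  sInf_le fun _ hz _ hz' hcard =>
    chain_of_forall_mueq_le (le_iSup mueq) _ ⟨hz, rfl⟩ ⟨hz', hcard.symm⟩

theorem stmt4_general {α : Type*} [CancelCommMonoid α] :
    (∀ a : α, mueq a ≤ ceq a) ∧ ceqH α = mueqH α :=
  ⟨mueq_le_ceq, le_antisymm (iSup_le ceq_le_mueqH) (iSup_mono mueq_le_ceq)⟩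

/-- Let `H` be a reduced, commutative, cancellative, atomic monoid. Then
`c_eq(a) ≥ μ_eq(a)` for every `a ∈ H`, and `c_eq(H) = μ_eq(H)`. -/
theorem stmt4 {α : Type*} [CancelCommMonoid α]
    (hred : Reduced α) (hatomic : Atomic α) :
    (∀ a : α, mueq a ≤ ceq a) ∧ ceqH α = mueqH α :=
  stmt4_general

end CMR
end
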